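/- arXiv:2108.12791 — 4 statements merged into one kernel-verified Lean document; each statement's English description precedes it below -/
import Mathlib

section
/- In a symplectic vector space over a field K (every vector isotropic), any Eichler transformation is a product of three transvections: if c is perpendicular to a then E(c,a) = T_{a+c} ∘ T_a^{-1} ∘ T_c^{-1}, where T_v(x) = x + ⟨x,v⟩v. -/
/-! Write `y = T_c⁻¹ x` and `z = T_a⁻¹ y`. Since `a ⊥ c` and both are isotropic, `⟨y, a⟩ = ⟨x, a⟩`
and `⟨z, a + c⟩ = ⟨x, a⟩ + ⟨x, c⟩`, after which `T_{a+c} z` expands to `E(c,a) x`. -/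

theorem LinearMap.IsAlt.eichler_eq_transvection_comp {R M : Type*} [CommRing R]
    [AddCommGroup M] [Module R M] {B : M →ₗ[R] M →ₗ[R] R} (hB : B.IsAlt) {a c : M}
    (hac : B a c = 0) (x : M) :
    x + B x a • c + B x c • a
      = (fun y => y + B y (a + c) • (a + c))
          ((fun y => y - B y a • a) ((fun y => y - B y c • c) x)) := by
  have hca : B c a = 0 := hB.eq_iff.mp hac
  have hya : B (x - B x c • c) a = B x a := by simp [hca]
  have hz : B (x - B x c • c - B x a • a) (a + c) = B x a + B x c := by
    simp [hB.self_eq_zero, hac, hca]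
  beta_reduce
  rw [hya, hz]
  module

theorem stmt_7_general {K : Type*} [Field K]
    {M : Type*} [AddCommGroup M] [Module K M]
    (B : M →ₗ[K] M →ₗ[K] K)
    (halt : ∀ v : M, B v v = 0)
    (a c : M) (hac : B a c = 0) :
    ∀ x : M,
      x + (B x a) • c + (B x c) • a
        = (fun y => y + (B y (a + c)) • (a + c))
            ((fun y => y - (B y a) • a) ((fun y => y - (B y c) • c) x)) :=
  LinearMap.IsAlt.eichler_eq_transvection_comp halt hac

/-- In a symplectic vector space over a field `K` of characteristic zero (an
alternating bilinear form, so every vector is isotropic), any Eichler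
transformation is a product of three transvections: if `⟨a,c⟩ = 0` then
`E(c,a) = T_{a+c} ∘ T_a⁻¹ ∘ T_c⁻¹`, where `T_v(x) = x + ⟨x,v⟩v` and
`T_v⁻¹(x) = x − ⟨x,v⟩v`. -/
theorem stmt_7 {K : Type*} [Field K] [CharZero K]
    {M : Type*} [AddCommGroup M] [Module K M]
    (B : M →ₗ[K] M →ₗ[K] K)
    (halt : ∀ v : M, B v v = 0)
    (a c : M) (hac : B a c = 0) :
    ∀ x : M,
      x + (B x a) • c + (B x c) • a
        = (fun y => y + (B y (a + c)) • (a + c))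
            ((fun y => y - (B y a) • a) ((fun y => y - (B y c) • c) x)) :=
  stmt_7_general B halt a c hac
end

section
/- With M a ℤG-module with G-invariant symplectic form and ⟨a,b⟩ = ∑_g (g^{-1}a·b)e_g as above: if a ∈ M satisfies ⟨a,a⟩ = 0 (equivalently a·ga = 0 for all g ∈ G), then for every r ∈ R_+ = {r ∈ ℤG : r† = r}, the map T_a(r) : x ↦ x + ⟨x,a⟩·r·a is a ℤG-module automorphism of M preserving ⟨·,·⟩, and r ↦ T_a(r) is a group homomorphism from the additive group R_+ to Aut(M, ⟨·,·⟩). -/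
/-- The anti-involution `†` on `ℤG`, determined by `e_g† = e_{g⁻¹}`. -/
noncomputable def zdagger {G : Type*} [Group G] [Fintype G]
    (r : MonoidAlgebra ℤ G) : MonoidAlgebra ℤ G :=
  ∑ g : G, MonoidAlgebra.single g⁻¹ (r.coeff g)

/-- The `ℤG`-valued form `⟨a,b⟩ = ∑_{g∈G} (g⁻¹a · b) e_g`. -/
noncomputable def eqForm {G M : Type*} [Group G] [Fintype G] [AddCommGroup M]
    [DistribMulAction G M] (B : M → M → ℤ) (a b : M) : MonoidAlgebra ℤ G :=
  ∑ g : G, MonoidAlgebra.single g (B (g⁻¹ • a) b)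

/-- The action of an element `s = ∑ s_g e_g` of `ℤG` on `m ∈ M`: `∑ s_g (g • m)`. -/
noncomputable def gact {G M : Type*} [Group G] [Fintype G] [AddCommGroup M]
    [DistribMulAction G M] (s : MonoidAlgebra ℤ G) (m : M) : M :=
  ∑ g : G, (s.coeff g) • (g • m)

/-- The transvection `T_a(r) : x ↦ x + ⟨x,a⟩·r·a`. -/
noncomputable def Ta {G M : Type*} [Group G] [Fintype G] [AddCommGroup M]
    [DistribMulAction G M] (B : M → M → ℤ) (a : M) (r : MonoidAlgebra ℤ G)
    (x : M) : M :=
  x + gact (eqForm (G := G) B x a * r) a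

/-!
Writing `s·m` for the action of `s ∈ ℤG` on `M`, the form `⟨·,·⟩` is `ℤG`-linear on the left and
`†`-semilinear on the right, `⟨s·x, y⟩ = s⟨x, y⟩` and `⟨x, s·y⟩ = ⟨x, y⟩ s†`, and it is
`†`-skew: `⟨x, y⟩† = -⟨y, x⟩`. Since `⟨a, a⟩ = 0`, the cross term in `T_a(r) ∘ T_a(r')` vanishes,
so `r ↦ T_a(r)` is additive, and `T_a(-r)` inverts `T_a(r)`. Expanding `⟨T_a(r) x, T_a(r) y⟩`, the
term `⟨x,a⟩ r ⟨a,a⟩ r† ⟨a,y⟩` vanishes and the two remaining correction terms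
`⟨x,a⟩ r ⟨a,y⟩` and `⟨x,a⟩ (⟨y,a⟩ r)†` cancel exactly because `r† = r`.
-/

namespace MonoidAlgebra

variable {G : Type*} [Group G] [Fintype G]

lemma coeff_mul_eq_sum (x y : MonoidAlgebra ℤ G) (g : G) :
    (x * y).coeff g = ∑ h : G, x.coeff h * y.coeff (h⁻¹ * g) := by
  rw [coeff_mul_apply_left, Finsupp.sum_fintype _ _ (by simp)]

lemma coeff_zdagger (r : MonoidAlgebra ℤ G) (g : G) : (zdagger r).coeff g = r.coeff g⁻¹ := by
  classical
  simp [zdagger, coeff_sum, Finset.sum_apply', coeff_single, Finsupp.single_apply,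
    inv_eq_iff_eq_inv]

lemma zdagger_mul (x y : MonoidAlgebra ℤ G) : zdagger (x * y) = zdagger y * zdagger x := by
  ext g
  rw [coeff_zdagger, coeff_mul_eq_sum, coeff_mul_eq_sum]
  refine Fintype.sum_equiv (Equiv.mulLeft g) _ _ fun k => ?_
  rw [Equiv.coe_mulLeft, coeff_zdagger, coeff_zdagger, mul_comm,
    show ((g * k)⁻¹ * g)⁻¹ = k by group, mul_inv_rev]

end MonoidAlgebra

open MonoidAlgebra

section Action

variable {G M : Type*} [Group G] [Fintype G] [AddCommGroup M] [DistribMulAction G M]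

lemma gact_add_left (s t : MonoidAlgebra ℤ G) (m : M) :
    gact (s + t) m = gact s m + gact t m := by
  simp only [gact, coeff_add, Finsupp.add_apply, add_smul, Finset.sum_add_distrib]

lemma gact_zero_left (m : M) : gact (0 : MonoidAlgebra ℤ G) m = 0 := by
  simp [gact]

lemma gact_single_one_mul (g : G) (s : MonoidAlgebra ℤ G) (m : M) :
    gact (single g 1 * s) m = g • gact s m := by
  rw [gact, gact, Finset.smul_sum]
  refine Fintype.sum_equiv (Equiv.mulLeft g⁻¹) _ _ fun h => ?_
  simp only [Equiv.coe_mulLeft, coeff_single_mul_apply, one_mul]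
  rw [smul_comm g, mul_smul, smul_inv_smul]

end Action

section Form

variable {G M : Type*} [Group G] [Fintype G] [AddCommGroup M] [DistribMulAction G M]
  (B : M → M → ℤ)

lemma coeff_eqForm (x y : M) (g : G) : (eqForm (G := G) B x y).coeff g = B (g⁻¹ • x) y := by
  classical
  simp [eqForm, coeff_sum, Finset.sum_apply', coeff_single, Finsupp.single_apply]

lemma eqForm_add_left (haddl : ∀ x x' y : M, B (x + x') y = B x y + B x' y) (x x' y : M) :
    eqForm (G := G) B (x + x') y = eqForm B x y + eqForm B x' y := by
  ext g
  rw [coeff_add, Finsupp.add_apply, coeff_eqForm, coeff_eqForm, coeff_eqForm, smul_add, haddl]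

lemma eqForm_add_right (haddr : ∀ x y y' : M, B x (y + y') = B x y + B x y') (x y y' : M) :
    eqForm (G := G) B x (y + y') = eqForm B x y + eqForm B x y' := by
  ext g
  rw [coeff_add, Finsupp.add_apply, coeff_eqForm, coeff_eqForm, coeff_eqForm, haddr]

lemma eqForm_smul_left (g : G) (x y : M) :
    eqForm (G := G) B (g • x) y = single g 1 * eqForm B x y := by
  ext h
  rw [coeff_eqForm, coeff_single_mul_apply, coeff_eqForm, one_mul, mul_inv_rev, mul_smul,
    inv_inv]

lemma apply_sum_zsmul_left (haddl : ∀ x x' y : M, B (x + x') y = B x y + B x' y)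
    {ι : Type*} [Fintype ι] (c : ι → ℤ) (m : ι → M) (y : M) :
    B (∑ i, c i • m i) y = ∑ i, c i * B (m i) y := by
  let By : M →+ ℤ := AddMonoidHom.mk' (B · y) fun x x' => haddl x x' y
  change By _ = ∑ i, c i * By (m i)
  simp only [map_sum, map_zsmul, smul_eq_mul]

lemma apply_sum_zsmul_right (haddr : ∀ x y y' : M, B x (y + y') = B x y + B x y')
    {ι : Type*} [Fintype ι] (c : ι → ℤ) (x : M) (m : ι → M) :
    B x (∑ i, c i • m i) = ∑ i, c i * B x (m i) := by
  let Bx : M →+ ℤ := AddMonoidHom.mk' (B x) (haddr x)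
  change Bx _ = ∑ i, c i * Bx (m i)
  simp only [map_sum, map_zsmul, smul_eq_mul]

lemma eqForm_gact_left (haddl : ∀ x x' y : M, B (x + x') y = B x y + B x' y)
    (s : MonoidAlgebra ℤ G) (x y : M) :
    eqForm B (gact s x) y = s * eqForm B x y := by
  ext g
  have hsmul : g⁻¹ • gact s x = ∑ h : G, s.coeff h • (g⁻¹ * h) • x := by
    simp only [gact, Finset.smul_sum, smul_comm g⁻¹ (s.coeff _), mul_smul]
  rw [coeff_eqForm, coeff_mul_eq_sum, hsmul, apply_sum_zsmul_left B haddl]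
  simp only [coeff_eqForm, mul_inv_rev, inv_inv]

lemma eqForm_gact_right (haddr : ∀ x y y' : M, B x (y + y') = B x y + B x y')
    (hG : ∀ (g : G) (x y : M), B (g • x) (g • y) = B x y) (s : MonoidAlgebra ℤ G) (x y : M) :
    eqForm B x (gact s y) = eqForm B x y * zdagger s := by
  ext g
  rw [coeff_eqForm, gact, apply_sum_zsmul_right B haddr, coeff_mul_eq_sum]
  refine Fintype.sum_equiv (Equiv.mulLeft g) _ _ fun k => ?_
  rw [Equiv.coe_mulLeft, coeff_eqForm, coeff_zdagger, show ((g * k)⁻¹ * g)⁻¹ = k by group,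
    mul_comm, mul_inv_rev, mul_smul, ← hG k (k⁻¹ • g⁻¹ • x) y, smul_inv_smul]

lemma zdagger_eqForm (haddl : ∀ x x' y : M, B (x + x') y = B x y + B x' y)
    (haddr : ∀ x y y' : M, B x (y + y') = B x y + B x y') (halt : ∀ x : M, B x x = 0)
    (hG : ∀ (g : G) (x y : M), B (g • x) (g • y) = B x y) (x y : M) :
    zdagger (eqForm (G := G) B x y) = -eqForm B y x := by
  have skew : ∀ u v : M, B u v = -B v u := fun u v => by
    have := halt (u + v)
    rw [haddl, haddr, haddr, halt, halt] at this
    linarith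
  ext g
  rw [coeff_zdagger, coeff_eqForm, coeff_neg, Finsupp.neg_apply, coeff_eqForm, inv_inv,
    skew, ← hG g⁻¹, inv_smul_smul]

end Form

section Transvection

variable {G M : Type*} [Group G] [Fintype G] [AddCommGroup M] [DistribMulAction G M]
  (B : M → M → ℤ) (a : M)

lemma Ta_zero : Ta B a (0 : MonoidAlgebra ℤ G) = id := by
  funext x
  simp [Ta, gact_zero_left]

lemma Ta_add (haddl : ∀ x x' y : M, B (x + x') y = B x y + B x' y)
    (ha : eqForm (G := G) B a a = 0) (r r' : MonoidAlgebra ℤ G) :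
    Ta B a (r + r') = Ta B a r ∘ Ta B a r' := by
  funext x
  simp only [Function.comp_apply, Ta]
  rw [eqForm_add_left B haddl, eqForm_gact_left B haddl, ha, mul_zero, add_zero, mul_add,
    gact_add_left]
  abel

lemma Ta_bijective (haddl : ∀ x x' y : M, B (x + x') y = B x y + B x' y)
    (ha : eqForm (G := G) B a a = 0) (r : MonoidAlgebra ℤ G) :
    Function.Bijective (Ta B a r) := by
  have hinv : ∀ s : MonoidAlgebra ℤ G, Ta B a (-s) ∘ Ta B a s = id := fun s => by
    rw [← Ta_add B a haddl ha, neg_add_cancel, Ta_zero]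
  exact Function.bijective_iff_has_inverse.mpr
    ⟨Ta B a (-r), congrFun (hinv r), fun x => by simpa using congrFun (hinv (-r)) x⟩

lemma Ta_map_add (haddl : ∀ x x' y : M, B (x + x') y = B x y + B x' y)
    (r : MonoidAlgebra ℤ G) (x y : M) :
    Ta B a r (x + y) = Ta B a r x + Ta B a r y := by
  simp only [Ta]
  rw [eqForm_add_left B haddl, add_mul, gact_add_left]
  abel

lemma Ta_smul (r : MonoidAlgebra ℤ G) (g : G) (x : M) : Ta B a r (g • x) = g • Ta B a r x := by
  rw [Ta, Ta, eqForm_smul_left, mul_assoc, gact_single_one_mul, smul_add]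

lemma eqForm_Ta (haddl : ∀ x x' y : M, B (x + x') y = B x y + B x' y)
    (haddr : ∀ x y y' : M, B x (y + y') = B x y + B x y')
    (halt : ∀ x : M, B x x = 0) (hG : ∀ (g : G) (x y : M), B (g • x) (g • y) = B x y)
    (ha : eqForm (G := G) B a a = 0) {r : MonoidAlgebra ℤ G} (hr : zdagger r = r) (x y : M) :
    eqForm (G := G) B (Ta B a r x) (Ta B a r y) = eqForm B x y := by
  have hdagger : zdagger (eqForm B y a * r) = -(r * eqForm B a y) := by
    rw [zdagger_mul, zdagger_eqForm B haddl haddr halt hG, hr, mul_neg]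
  simp only [Ta, eqForm_add_left B haddl, eqForm_add_right B haddr,
    eqForm_gact_right B haddr hG, eqForm_gact_left B haddl]
  rw [ha, mul_zero, zero_mul, add_zero, hdagger, mul_neg, ← mul_assoc]
  abel

end Transvection

theorem stmt_14_general {G M : Type*} [Group G] [Fintype G] [AddCommGroup M]
    [DistribMulAction G M]
    (B : M → M → ℤ)
    (haddl : ∀ a a' b : M, B (a + a') b = B a b + B a' b)
    (haddr : ∀ a b b' : M, B a (b + b') = B a b + B a b')
    (halt : ∀ a : M, B a a = 0)
    (hG : ∀ (g : G) (a b : M), B (g • a) (g • b) = B a b)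
    (a : M) (ha : eqForm (G := G) B a a = 0) :
    (∀ r : MonoidAlgebra ℤ G, zdagger r = r →
      (∀ x y : M, Ta B a r (x + y) = Ta B a r x + Ta B a r y) ∧
      (∀ (g : G) (x : M), Ta B a r (g • x) = g • Ta B a r x) ∧
      Function.Bijective (Ta B a r) ∧
      (∀ x y : M,
        eqForm (G := G) B (Ta B a r x) (Ta B a r y) = eqForm (G := G) B x y)) ∧
    (∀ r r' : MonoidAlgebra ℤ G, zdagger r = r → zdagger r' = r' →
      Ta B a (r + r') = Ta B a r ∘ Ta B a r') :=
  ⟨fun r hr => ⟨Ta_map_add B a haddl r, fun g x => Ta_smul B a r g x,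
      Ta_bijective B a haddl ha r, eqForm_Ta B a haddl haddr halt hG ha hr⟩,
    fun r r' _ _ => Ta_add B a haddl ha r r'⟩

/-- If `a ∈ M` is `R`-isotropic (`⟨a,a⟩ = 0` in `ℤG`), then for every
`r ∈ R₊ = {r ∈ ℤG : r† = r}` the map `T_a(r) : x ↦ x + ⟨x,a⟩·r·a` is a
`ℤG`-module automorphism of `M` preserving `⟨·,·⟩`, and `r ↦ T_a(r)` is a group
homomorphism from the additive group `R₊` to `Aut(M, ⟨·,·⟩)`. -/
theorem stmt_14 {G M : Type*} [Group G] [Fintype G] [AddCommGroup M]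
    [Module.Free ℤ M] [Module.Finite ℤ M] [DistribMulAction G M]
    (B : M → M → ℤ)
    (haddl : ∀ a a' b : M, B (a + a') b = B a b + B a' b)
    (haddr : ∀ a b b' : M, B a (b + b') = B a b + B a b')
    (halt : ∀ a : M, B a a = 0)
    (hnd : ∀ a : M, (∀ b : M, B a b = 0) → a = 0)
    (hG : ∀ (g : G) (a b : M), B (g • a) (g • b) = B a b)
    (a : M) (ha : eqForm (G := G) B a a = 0) :
    (∀ r : MonoidAlgebra ℤ G, zdagger r = r →
      (∀ x y : M, Ta B a r (x + y) = Ta B a r x + Ta B a r y) ∧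
      (∀ (g : G) (x : M), Ta B a r (g • x) = g • Ta B a r x) ∧
      Function.Bijective (Ta B a r) ∧
      (∀ x y : M,
        eqForm (G := G) B (Ta B a r x) (Ta B a r y) = eqForm (G := G) B x y)) ∧
    (∀ r r' : MonoidAlgebra ℤ G, zdagger r = r → zdagger r' = r' →
      Ta B a (r + r') = Ta B a r ∘ Ta B a r') :=
  stmt_14_general B haddl haddr halt hG a ha
end

section
/- Let G be a finite group, R = ℤG, and M a ℤG-module with G-invariant symplectic form and associated R-valued skew-hermitian form ⟨·,·⟩. Suppose a ∈ M is R-isotropic and D is the G-equivariant transformation x ↦ x + ∑_{g∈G}(x · g(1−h)a)·g(1−h)a for some h ∈ G, where (1−h)a = a − ha. Then D = T_a(2 − e_h − e_h†), i.e., D(x) = x + ⟨x,a⟩(2 − e_h − e_{h^{-1}})a for all x ∈ M. -/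
open Finset

theorem Fintype.sum_sub_mul_right_smul_sub {G R M : Type*} [Group G] [Fintype G] [Ring R]
    [AddCommGroup M] [Module R M] (f : G → R) (v : G → M) (h : G) :
    ∑ g, (f g - f (g * h)) • (v g - v (g * h))
      = ∑ g, (2 * f g - f (g * h⁻¹) - f (g * h)) • v g := by
  have shift : ∑ g, f (g * h) • v (g * h) = ∑ g, f g • v g :=
    Fintype.sum_equiv (Equiv.mulRight h) _ _ fun _ => rfl
  have shift_inv : ∑ g, f g • v (g * h) = ∑ g, f (g * h⁻¹) • v g :=
    Fintype.sum_equiv (Equiv.mulRight h) _ _ fun g => by simp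
  simp only [smul_sub, sub_smul, two_mul, add_smul, sum_sub_distrib, sum_add_distrib,
    shift, shift_inv]
  abel

theorem MonoidAlgebra.coeff_mul_two_sub_single_sub_single {k G : Type*} [Ring k] [Group G]
    (s : MonoidAlgebra k G) (h g : G) :
    (s * (2 - single h 1 - single h⁻¹ 1)).coeff g
      = 2 * s.coeff g - s.coeff (g * h⁻¹) - s.coeff (g * h) := by
  rw [mul_sub, mul_sub, coeff_sub, coeff_sub, Finsupp.sub_apply, Finsupp.sub_apply,
    coeff_mul_single_apply, coeff_mul_single_apply, inv_inv, mul_one, mul_one, mul_two,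
    two_mul, coeff_add, Finsupp.add_apply]

theorem eqForm_coeff_of_smul_invariant {G M : Type*} [Group G] [Fintype G] [AddCommGroup M]
    [DistribMulAction G M] (B : M → M → ℤ) (hG : ∀ (g : G) (a b : M), B (g • a) (g • b) = B a b)
    (x a : M) (g : G) : (eqForm (G := G) B x a).coeff g = B x (g • a) := by
  rw [eqForm, MonoidAlgebra.coeff_sum, Finset.sum_apply', Finset.sum_eq_single g]
  · rw [MonoidAlgebra.coeff_single, Finsupp.single_eq_same, ← hG g, smul_inv_smul]
  · intro g' _ hg'
    rw [MonoidAlgebra.coeff_single, Finsupp.single_eq_of_ne hg'.symm]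
  · simp

theorem stmt_15_general {G M : Type*} [Group G] [Fintype G] [AddCommGroup M]
    [DistribMulAction G M]
    (B : M → M → ℤ)
    (haddr : ∀ a b b' : M, B a (b + b') = B a b + B a b')
    (hG : ∀ (g : G) (a b : M), B (g • a) (g • b) = B a b)
    (a : M) (h : G) :
    ∀ x : M,
      x + ∑ g : G, (B x (g • (a - h • a))) • (g • (a - h • a))
        = x + gact (eqForm (G := G) B x a *
            (2 - MonoidAlgebra.single h 1 - MonoidAlgebra.single h⁻¹ 1)) a := by
  intro x
  have twist_vector (g : G) : g • (a - h • a) = g • a - (g * h) • a := by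
    rw [smul_sub, mul_smul]
  have form_sub (u v : M) : B x (u - v) = B x u - B x v :=
    (AddMonoidHom.mk' (B x) (haddr x)).map_sub u v
  simp only [gact, MonoidAlgebra.coeff_mul_two_sub_single_sub_single,
    eqForm_coeff_of_smul_invariant B hG, form_sub, twist_vector]
  rw [Fintype.sum_sub_mul_right_smul_sub (fun g => B x (g • a)) (fun g => g • a)]

/-- Homological action of the equivariant multi-Dehn twist: if `a` is
`R`-isotropic and `h ∈ G`, then the `G`-equivariant transformation
`D : x ↦ x + ∑_{g∈G} (x · g(1−h)a) · g(1−h)a` (where `(1−h)a = a − h•a`)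
equals `T_a(2 − e_h − e_h†)`, i.e.
`D(x) = x + ⟨x,a⟩(2 − e_h − e_{h⁻¹})a` for all `x ∈ M`. -/
theorem stmt_15 {G M : Type*} [Group G] [Fintype G] [AddCommGroup M]
    [Module.Free ℤ M] [Module.Finite ℤ M] [DistribMulAction G M]
    (B : M → M → ℤ)
    (haddl : ∀ a a' b : M, B (a + a') b = B a b + B a' b)
    (haddr : ∀ a b b' : M, B a (b + b') = B a b + B a b')
    (halt : ∀ a : M, B a a = 0)
    (hnd : ∀ a : M, (∀ b : M, B a b = 0) → a = 0)
    (hG : ∀ (g : G) (a b : M), B (g • a) (g • b) = B a b)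
    (a : M) (ha : eqForm (G := G) B a a = 0) (h : G) :
    ∀ x : M,
      x + ∑ g : G, (B x (g • (a - h • a))) • (g • (a - h • a))
        = x + gact (eqForm (G := G) B x a *
            (2 - MonoidAlgebra.single h 1 - MonoidAlgebra.single h⁻¹ 1)) a :=
  stmt_15_general B haddr hG a h
end

section
/- Let D be a division ring with positive anti-involution †, M a left D-module with skew-hermitian form, M_o its radical, and suppose every element of a subgroup U of the form-preserving automorphisms acts trivially on M_o and on M/M_o. If c ∈ M_o and a ∈ M, then the Eichler transformation E(c,a) acts trivially on M_o and on M/M_o, and the assignment c⊗a ↦ E(c,a) descends to a well-defined map on M_o† ⊗_D (M/M_o); furthermore E(c,a)∘E(c',a') = E(c,a)·E(c',a') corresponds to addition: E(c,a)∘E(c',a')(x) ≡ x + ⟨x,a⟩c + ⟨x,a'⟩c' modulo the stated triviality, making the unipotent radical a vector group extension 0 → u(M_o) → R_u → M_o†⊗_D(M/M_o) → 0. -/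
/-! Skew-hermitian symmetry makes the radical `M₀` a two-sided radical, so for `c ∈ M₀` every term
of `E(c,a)` containing `⟨x,c⟩` vanishes and `E(c,a) x = x + ⟨x,a⟩c`. Since moving `x` by a vector of
`M₀` does not change `⟨x,a⟩`, these maps compose by adding their translation parts. -/

/-- The Eichler transformation `E(c,a) : x ↦ x + ⟨x,a⟩c + ⟨x,c⟩a + (1/2)⟨x,c⟩⟨a,a⟩c`. -/
def eichlerHalf {D : Type*} [DivisionRing D] {M : Type*} [AddCommGroup M]
    [Module D M] (B : M → M → D) (c a : M) : M → M :=
  fun x => x + (B x a) • c + (B x c) • a + ((2 : D)⁻¹ * (B x c * B a a)) • c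

theorem form_right_eq_zero_of_radical {R M : Type*} [AddGroup R] [StarAddMonoid R]
    {B : M → M → R} (hskew : ∀ a b : M, B b a = - star (B a b))
    {c : M} (hc : ∀ y : M, B c y = 0) (x : M) : B x c = 0 := by
  rw [hskew, hc, star_zero, neg_zero]

section Form

variable {R M : Type*} [Ring R] [AddCommGroup M] [Module R M] {B : M → M → R}

theorem form_zero_left (hlin : ∀ (d : R) (a a' b : M), B (d • a + a') b = d * B a b + B a' b)
    (b : M) : B 0 b = 0 := by
  have h := hlin 1 0 0 b
  rwa [smul_zero, add_zero, one_mul, left_eq_add] at h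

theorem form_smul_left (hlin : ∀ (d : R) (a a' b : M), B (d • a + a') b = d * B a b + B a' b)
    (d : R) (z y : M) : B (d • z) y = d * B z y := by
  simpa [form_zero_left hlin] using hlin d z 0 y

theorem form_add_smul_left_of_radical
    (hlin : ∀ (d : R) (a a' b : M), B (d • a + a') b = d * B a b + B a' b)
    {c : M} (hc : ∀ y : M, B c y = 0) (x : M) (d : R) (y : M) : B (x + d • c) y = B x y := by
  rw [add_comm, hlin, hc, mul_zero, zero_add]

end Form

section Eichler

variable {D M : Type*} [DivisionRing D] [StarRing D] [AddCommGroup M] [Module D M]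
  {B : M → M → D}

theorem eichlerHalf_eq_of_radical (hskew : ∀ a b : M, B b a = - star (B a b))
    {c : M} (hc : ∀ y : M, B c y = 0) (a x : M) : eichlerHalf B c a x = x + B x a • c := by
  simp [eichlerHalf, form_right_eq_zero_of_radical hskew hc]

theorem eichlerHalf_comp_of_radical
    (hlin : ∀ (d : D) (a a' b : M), B (d • a + a') b = d * B a b + B a' b)
    (hskew : ∀ a b : M, B b a = - star (B a b))
    {c c' : M} (hc : ∀ y : M, B c y = 0) (hc' : ∀ y : M, B c' y = 0) (a a' x : M) :
    eichlerHalf B c a (eichlerHalf B c' a' x) = x + B x a • c + B x a' • c' := by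
  rw [eichlerHalf_eq_of_radical hskew hc', eichlerHalf_eq_of_radical hskew hc,
    form_add_smul_left_of_radical hlin hc']
  abel

end Eichler

theorem stmt_17_general {D : Type*} [DivisionRing D] [StarRing D]
    {M : Type*} [AddCommGroup M] [Module D M]
    (B : M → M → D)
    (hlin : ∀ (d : D) (a a' b : M), B (d • a + a') b = d * B a b + B a' b)
    (hskew : ∀ a b : M, B b a = - star (B a b))
    (c c' a a' : M)
    (hc : ∀ y : M, B c y = 0) (hc' : ∀ y : M, B c' y = 0) :
    (∀ x : M, eichlerHalf B c a x = x + (B x a) • c) ∧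
    (∀ m : M, (∀ y : M, B m y = 0) → eichlerHalf B c a m = m) ∧
    (∀ x y : M, B (eichlerHalf B c a x - x) y = 0) ∧
    (∀ x : M, eichlerHalf B c a (eichlerHalf B c' a' x)
        = x + (B x a) • c + (B x a') • c') ∧
    ((∀ x : M, (B x a) • c = (B x a') • c') →
      ∀ x : M, eichlerHalf B c a x = eichlerHalf B c' a' x) := by
  have hE := eichlerHalf_eq_of_radical hskew hc a
  refine ⟨hE, fun m hm => ?_, fun x y => ?_, eichlerHalf_comp_of_radical hlin hskew hc hc' a a',
    fun h x => ?_⟩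
  · rw [hE, hm, zero_smul, add_zero]
  · rw [hE, add_sub_cancel_left, form_smul_left hlin, hc, mul_zero]
  · rw [hE, eichlerHalf_eq_of_radical hskew hc', h]

/-- Let `D` be a division ring, finite-dimensional over `ℚ`, with a positive
anti-involution `†` (modelled by `star`), and `M` a left `D`-module with a
skew-hermitian form `B`, with radical `M₀ = {x : ∀ y, B x y = 0}`.  For
`c, c' ∈ M₀` and `a, a' ∈ M`:
* `E(c,a)` reduces to `x ↦ x + ⟨x,a⟩c`;
* `E(c,a)` acts trivially on `M₀`;
* `E(c,a)` acts trivially on `M/M₀` (i.e. `E(c,a)x − x ∈ M₀`);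
* composition corresponds to addition:
  `E(c,a) ∘ E(c',a') (x) = x + ⟨x,a⟩c + ⟨x,a'⟩c'`;
* the assignment `c ⊗ a ↦ E(c,a)` is well defined on `M₀† ⊗_D (M/M₀)`:
  `E(c,a)` depends only on the map `x ↦ ⟨x,a⟩c`.
(These facts make the unipotent radical an extension of vector groups
`0 → u(M₀) → R_u → M₀† ⊗_D (M/M₀) → 0`.) -/
theorem stmt_17 {D : Type*} [DivisionRing D] [CharZero D] [StarRing D]
    [Algebra ℚ D] [FiniteDimensional ℚ D]
    {M : Type*} [AddCommGroup M] [Module D M]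
    (hpos : ∀ d : D, d ≠ 0 →
      0 < LinearMap.trace ℚ D (LinearMap.mulLeft ℚ (d * star d)))
    (B : M → M → D)
    (hlin : ∀ (d : D) (a a' b : M), B (d • a + a') b = d * B a b + B a' b)
    (hskew : ∀ a b : M, B b a = - star (B a b))
    (c c' a a' : M)
    (hc : ∀ y : M, B c y = 0) (hc' : ∀ y : M, B c' y = 0) :
    (∀ x : M, eichlerHalf B c a x = x + (B x a) • c) ∧
    (∀ m : M, (∀ y : M, B m y = 0) → eichlerHalf B c a m = m) ∧
    (∀ x y : M, B (eichlerHalf B c a x - x) y = 0) ∧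
    (∀ x : M, eichlerHalf B c a (eichlerHalf B c' a' x)
        = x + (B x a) • c + (B x a') • c') ∧
    ((∀ x : M, (B x a) • c = (B x a') • c') →
      ∀ x : M, eichlerHalf B c a x = eichlerHalf B c' a' x) :=
  stmt_17_general B hlin hskew c c' a a' hc hc'
end
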